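/- (The surrogate objective Q minorizes the penalized log-likelihood ℓ₁.) Suppose each penalty ρ_j : [0,∞) → ℝ is nondecreasing, concave and differentiable on (0,∞), and continuous at 0. Fix current coefficients β⁰ with β⁰_{jk} ≠ 0 for all j = 1,…,m and k = 1,…,p, and define Q(θ) = ℓ_n(θ) − ∑_{j=1}^m ∑_{k=1}^p ρ̃_j(β_{jk}; β⁰_{jk}). Then for every parameter θ = (π, β, σ) with strictly positive mixing proportions summing to 1 and strictly positive scales, Q(θ) ≤ ℓ₁(θ); moreover Q(θ⁰) = ℓ₁(θ⁰) for any parameter θ⁰ whose coefficient vectors are β⁰. Consequently, if Q(θ¹) ≥ Q(θ⁰) then ℓ₁(θ¹) ≥ ℓ₁(θ⁰). -/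
import Mathlib


open scoped BigOperators

/-- The `N(μ, σ²)` density `φ(y; μ, σ²)`. -/
noncomputable def gaussPdf (y μ σ : ℝ) : ℝ :=
  (σ * Real.sqrt (2 * Real.pi))⁻¹ * Real.exp (-((y - μ) ^ 2) / (2 * σ ^ 2))

/-- The mixture-of-linear-regressions density `f(y|x, θ) = ∑ j π_j φ(y; xᵀβ_j, σ_j²)`. -/
noncomputable def mixDensity {m p : ℕ} (π : Fin m → ℝ)
    (β : Fin m → Fin (p + 1) → ℝ) (σ : Fin m → ℝ)
    (x : Fin (p + 1) → ℝ) (y : ℝ) : ℝ :=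
  ∑ j, π j * gaussPdf y (∑ k, x k * β j k) (σ j)

/-- The observed log-likelihood `ℓ_n(θ) = ∑ i log f(y_i|x_i, θ)`. -/
noncomputable def loglik {n m p : ℕ} (x : Fin n → Fin (p + 1) → ℝ) (y : Fin n → ℝ)
    (π : Fin m → ℝ) (β : Fin m → Fin (p + 1) → ℝ) (σ : Fin m → ℝ) : ℝ :=
  ∑ i, Real.log (mixDensity π β σ (x i) (y i))

/-- The penalized log-likelihood `ℓ₁(θ) = ℓ_n(θ) − ∑ j ∑ k ρ_j(|β_{jk}|)`,
where the penalty is applied to the non-intercept coefficients. -/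
noncomputable def penLoglik {n m p : ℕ} (x : Fin n → Fin (p + 1) → ℝ)
    (y : Fin n → ℝ) (ρ : Fin m → ℝ → ℝ)
    (π : Fin m → ℝ) (β : Fin m → Fin (p + 1) → ℝ) (σ : Fin m → ℝ) : ℝ :=
  loglik x y π β σ - ∑ j, ∑ k : Fin p, ρ j |β j k.succ|

/-- The local quadratic approximation
`ρ̃(b; b₀) = ρ(|b₀|) + (ρ'(|b₀|)/(2|b₀|))(b² − b₀²)`. -/
noncomputable def lqa (ρ : ℝ → ℝ) (b b₀ : ℝ) : ℝ :=
  ρ |b₀| + deriv ρ |b₀| / (2 * |b₀|) * (b ^ 2 - b₀ ^ 2)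

/-- The surrogate objective
`Q(θ) = ℓ_n(θ) − ∑ j ∑ k ρ̃_j(β_{jk}; β⁰_{jk})` built at current coefficients `β0`. -/
noncomputable def Qsurr {n m p : ℕ} (x : Fin n → Fin (p + 1) → ℝ) (y : Fin n → ℝ)
    (ρ : Fin m → ℝ → ℝ) (β0 : Fin m → Fin (p + 1) → ℝ)
    (π : Fin m → ℝ) (β : Fin m → Fin (p + 1) → ℝ) (σ : Fin m → ℝ) : ℝ :=
  loglik x y π β σ - ∑ j, ∑ k : Fin p, lqa (ρ j) (β j k.succ) (β0 j k.succ)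

/-- Tangent-line bound for a concave, monotone, differentiable penalty. -/
lemma penalty_tangent_le (ρ : ℝ → ℝ)
    (hmono : MonotoneOn ρ (Set.Ici (0:ℝ)))
    (hconc : ConcaveOn ℝ (Set.Ioi (0:ℝ)) ρ)
    (hdiff : ∀ s : ℝ, 0 < s → DifferentiableAt ℝ ρ s)
    (hcont : ContinuousWithinAt ρ (Set.Ici (0:ℝ)) 0)
    {s s₀ : ℝ} (hs : 0 ≤ s) (hs₀ : 0 < s₀) :
    ρ s ≤ ρ s₀ + deriv ρ s₀ * (s - s₀) := by
  have key : ∀ t : ℝ, 0 < t → ρ t ≤ ρ s₀ + deriv ρ s₀ * (t - s₀) := by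
    intro t ht
    rcases lt_trichotomy t s₀ with h1 | h2 | h3
    · have h := hconc.deriv_le_slope (Set.mem_Ioi.2 ht) (Set.mem_Ioi.2 hs₀) h1
        (hdiff s₀ hs₀)
      rw [slope_def_field, le_div_iff₀ (by linarith)] at h
      linarith
    · subst h2; simp
    · have h := hconc.slope_le_deriv (Set.mem_Ioi.2 hs₀)
        (Set.mem_Ioi.2 (by linarith : (0:ℝ) < t)) h3 (hdiff s₀ hs₀)
      rw [slope_def_field, div_le_iff₀ (by linarith)] at h
      linarith
  rcases hs.lt_or_eq with hpos | hzero
  · exact key s hpos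
  · subst hzero
    have hlim : Filter.Tendsto ρ (nhdsWithin 0 (Set.Ioi (0:ℝ))) (nhds (ρ 0)) :=
      hcont.tendsto.mono_left (nhdsWithin_mono _ Set.Ioi_subset_Ici_self)
    have hlim2 : Filter.Tendsto (fun t => ρ s₀ + deriv ρ s₀ * (t - s₀))
        (nhdsWithin 0 (Set.Ioi (0:ℝ))) (nhds (ρ s₀ + deriv ρ s₀ * (0 - s₀))) := by
      apply Filter.Tendsto.mono_left _ nhdsWithin_le_nhds
      exact (continuous_const.add (continuous_const.mul
        ((continuous_id.sub continuous_const)))).tendsto 0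
    refine le_of_tendsto_of_tendsto hlim hlim2 ?_
    filter_upwards [self_mem_nhdsWithin] with t ht
    exact key t ht

/-- The derivative of a monotone penalty is nonnegative. -/
lemma penalty_deriv_nonneg (ρ : ℝ → ℝ)
    (hmono : MonotoneOn ρ (Set.Ici (0:ℝ)))
    (hconc : ConcaveOn ℝ (Set.Ioi (0:ℝ)) ρ)
    (hdiff : ∀ s : ℝ, 0 < s → DifferentiableAt ℝ ρ s)
    {s₀ : ℝ} (hs₀ : 0 < s₀) : 0 ≤ deriv ρ s₀ := by
  have h := hconc.slope_le_deriv (Set.mem_Ioi.2 hs₀)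
    (Set.mem_Ioi.2 (by linarith : (0:ℝ) < s₀ + 1)) (by linarith) (hdiff s₀ hs₀)
  refine le_trans ?_ h
  rw [slope_def_field]
  have h1 : ρ s₀ ≤ ρ (s₀ + 1) :=
    hmono (Set.mem_Ici.2 hs₀.le) (Set.mem_Ici.2 (by linarith)) (by linarith)
  apply div_nonneg (by linarith) (by linarith)

/-- The LQA majorizes the penalty: `ρ(|b|) ≤ ρ̃(b; b₀)`. -/
lemma penalty_le_lqa (ρ : ℝ → ℝ)
    (hmono : MonotoneOn ρ (Set.Ici (0:ℝ)))
    (hconc : ConcaveOn ℝ (Set.Ioi (0:ℝ)) ρ)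
    (hdiff : ∀ s : ℝ, 0 < s → DifferentiableAt ℝ ρ s)
    (hcont : ContinuousWithinAt ρ (Set.Ici (0:ℝ)) 0)
    (b b₀ : ℝ) (hb₀ : b₀ ≠ 0) : ρ |b| ≤ lqa ρ b b₀ := by
  set s := |b| with hsdef
  set s₀ := |b₀| with hs₀def
  have hs : 0 ≤ s := abs_nonneg b
  have hs₀ : 0 < s₀ := abs_pos.2 hb₀
  have h1 := penalty_tangent_le ρ hmono hconc hdiff hcont hs hs₀
  have hd : 0 ≤ deriv ρ s₀ := penalty_deriv_nonneg ρ hmono hconc hdiff hs₀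
  have h2 : deriv ρ s₀ * (s - s₀) ≤ deriv ρ s₀ / (2 * s₀) * (s ^ 2 - s₀ ^ 2) := by
    rw [div_mul_eq_mul_div, le_div_iff₀ (by linarith)]
    have hsq : 0 ≤ (s - s₀) ^ 2 := sq_nonneg _
    nlinarith
  have hb2 : b ^ 2 = s ^ 2 := (sq_abs b).symm
  have hb02 : b₀ ^ 2 = s₀ ^ 2 := (sq_abs b₀).symm
  unfold lqa
  rw [← hs₀def, hb2, hb02]
  linarith

lemma lqa_self (ρ : ℝ → ℝ) (b : ℝ) : lqa ρ b b = ρ |b| := by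
  unfold lqa; ring

/-- The surrogate objective `Q` minorizes the penalized
log-likelihood `ℓ₁`: `Q(θ) ≤ ℓ₁(θ)` for all parameters `θ`, with equality for
any parameter whose coefficient vectors equal `β0`; consequently
`Q(θ¹) ≥ Q(θ⁰)` implies `ℓ₁(θ¹) ≥ ℓ₁(θ⁰)`. -/
theorem Q_minorizes_penalized_loglik
    (n m p : ℕ) (hn : 0 < n) (hm : 0 < m) (hp : 0 < p)
    (x : Fin n → Fin (p + 1) → ℝ) (y : Fin n → ℝ)
    (ρ : Fin m → ℝ → ℝ)
    (hρmono : ∀ j, MonotoneOn (ρ j) (Set.Ici (0:ℝ)))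
    (hρconc : ∀ j, ConcaveOn ℝ (Set.Ioi (0:ℝ)) (ρ j))
    (hρdiff : ∀ j, ∀ s : ℝ, 0 < s → DifferentiableAt ℝ (ρ j) s)
    (hρcont : ∀ j, ContinuousWithinAt (ρ j) (Set.Ici (0:ℝ)) 0)
    (β0 : Fin m → Fin (p + 1) → ℝ) (hβ0 : ∀ j, ∀ k : Fin p, β0 j k.succ ≠ 0) :
    (∀ (π : Fin m → ℝ) (β : Fin m → Fin (p + 1) → ℝ) (σ : Fin m → ℝ),
      (∀ j, 0 < π j) → ∑ j, π j = 1 → (∀ j, 0 < σ j) →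
      Qsurr x y ρ β0 π β σ ≤ penLoglik x y ρ π β σ) ∧
    (∀ (π0 : Fin m → ℝ) (σ0 : Fin m → ℝ),
      (∀ j, 0 < π0 j) → ∑ j, π0 j = 1 → (∀ j, 0 < σ0 j) →
      Qsurr x y ρ β0 π0 β0 σ0 = penLoglik x y ρ π0 β0 σ0) ∧
    (∀ (π0 : Fin m → ℝ) (σ0 : Fin m → ℝ)
        (π1 : Fin m → ℝ) (β1 : Fin m → Fin (p + 1) → ℝ) (σ1 : Fin m → ℝ),
      (∀ j, 0 < π0 j) → ∑ j, π0 j = 1 → (∀ j, 0 < σ0 j) →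
      (∀ j, 0 < π1 j) → ∑ j, π1 j = 1 → (∀ j, 0 < σ1 j) →
      Qsurr x y ρ β0 π1 β1 σ1 ≥ Qsurr x y ρ β0 π0 β0 σ0 →
      penLoglik x y ρ π1 β1 σ1 ≥ penLoglik x y ρ π0 β0 σ0) := by
  have hle : ∀ (π : Fin m → ℝ) (β : Fin m → Fin (p + 1) → ℝ) (σ : Fin m → ℝ),
      Qsurr x y ρ β0 π β σ ≤ penLoglik x y ρ π β σ := by
    intro π β σ
    unfold Qsurr penLoglik
    have : ∑ j, ∑ k : Fin p, ρ j |β j k.succ| ≤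
        ∑ j, ∑ k : Fin p, lqa (ρ j) (β j k.succ) (β0 j k.succ) := by
      refine Finset.sum_le_sum fun j _ => Finset.sum_le_sum fun k _ => ?_
      exact penalty_le_lqa (ρ j) (hρmono j) (hρconc j) (hρdiff j) (hρcont j)
        _ _ (hβ0 j k)
    linarith
  have heq : ∀ (π0 : Fin m → ℝ) (σ0 : Fin m → ℝ),
      Qsurr x y ρ β0 π0 β0 σ0 = penLoglik x y ρ π0 β0 σ0 := by
    intro π0 σ0
    unfold Qsurr penLoglik
    congr 1
    exact Finset.sum_congr rfl fun j _ => Finset.sum_congr rfl fun k _ =>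
      lqa_self (ρ j) (β0 j k.succ)
  refine ⟨fun π β σ _ _ _ => hle π β σ, fun π0 σ0 _ _ _ => heq π0 σ0,
    fun π0 σ0 π1 β1 σ1 _ _ _ _ _ _ h => ?_⟩
  calc penLoglik x y ρ π0 β0 σ0 = Qsurr x y ρ β0 π0 β0 σ0 := (heq π0 σ0).symm
    _ ≤ Qsurr x y ρ β0 π1 β1 σ1 := h
    _ ≤ penLoglik x y ρ π1 β1 σ1 := hle π1 β1 σ1
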